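/- arXiv:math/0401190 — 2 statements merged into one kernel-verified Lean document; each statement's English description precedes it below -/
import Mathlib

section
/- Let g ≥ 2 and e ≥ 2 be integers, let b, s, K, r, E be real numbers, and assume: (i) K − (2g−2)(2b−2+s) ≤ −(2g−2)s/e + 3r/e²; (ii) r ≤ E; (iii) E ≤ ((2g+1)/(g−1))·K; (iv) e²(g−1) > 3(2g+1). Then K ≤ 2e(g−1)²((2b−2+s)e − s) / (e²(g−1) − 3(2g+1)). -/
theorem stmt_2 (g e : ℤ) (hg : 2 ≤ g) (he : 2 ≤ e) (b s K r E : ℝ)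
    (h1 : K - (2 * (g : ℝ) - 2) * (2 * b - 2 + s) ≤
      -(2 * (g : ℝ) - 2) * s / (e : ℝ) + 3 * r / (e : ℝ) ^ 2)
    (h2 : r ≤ E)
    (h3 : E ≤ ((2 * (g : ℝ) + 1) / ((g : ℝ) - 1)) * K)
    (h4 : (e : ℝ) ^ 2 * ((g : ℝ) - 1) > 3 * (2 * (g : ℝ) + 1)) :
    K ≤ 2 * (e : ℝ) * ((g : ℝ) - 1) ^ 2 * ((2 * b - 2 + s) * (e : ℝ) - s) /
      ((e : ℝ) ^ 2 * ((g : ℝ) - 1) - 3 * (2 * (g : ℝ) + 1)) := by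
  have he' : (2:ℝ) ≤ (e:ℝ) := by exact_mod_cast he
  have hg' : (2:ℝ) ≤ (g:ℝ) := by exact_mod_cast hg
  have hep : (0:ℝ) < (e:ℝ) := by linarith
  have hgp : (0:ℝ) < (g:ℝ) - 1 := by linarith
  have hd : (0:ℝ) < (e:ℝ) ^ 2 * ((g:ℝ) - 1) - 3 * (2 * (g:ℝ) + 1) := by linarith
  rw [le_div_iff₀ hd]
  have h3' : E * ((g:ℝ) - 1) ≤ (2 * (g:ℝ) + 1) * K := by
    have := mul_le_mul_of_nonneg_right h3 hgp.le
    calc E * ((g:ℝ) - 1) ≤ ((2 * (g:ℝ) + 1) / ((g:ℝ) - 1)) * K * ((g:ℝ) - 1) := this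
    _ = (2 * (g:ℝ) + 1) * K := by field_simp
  have h1' : (K - (2 * (g : ℝ) - 2) * (2 * b - 2 + s)) * ((e:ℝ)^2) ≤
      -(2 * (g : ℝ) - 2) * s * (e:ℝ) + 3 * r := by
    have := mul_le_mul_of_nonneg_right h1 (by positivity : (0:ℝ) ≤ (e:ℝ)^2)
    calc (K - (2 * (g : ℝ) - 2) * (2 * b - 2 + s)) * ((e:ℝ)^2)
        ≤ (-(2 * (g : ℝ) - 2) * s / (e : ℝ) + 3 * r / (e : ℝ) ^ 2) * (e:ℝ)^2 := this
      _ = -(2 * (g : ℝ) - 2) * s * (e:ℝ) + 3 * r := by field_simp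
  nlinarith [mul_le_mul_of_nonneg_right h1' hgp.le, mul_le_mul_of_nonneg_left h2 (by norm_num : (0:ℝ) ≤ 3)]
end

section
/- Let g ≥ 2 be an integer and let k, x, y, m be real numbers with k > 0, x ≥ 0, x + y ≥ 2g − 2, k·y ≤ x², and m + x ≤ 2g − 2. Then k − m + 8(g−1) ≥ 6g − 6 + (1/2)·(k + √k·√(k + 8g − 8)). -/
theorem stmt_4 (g : ℤ) (hg : 2 ≤ g) (k x y m : ℝ)
    (hk : 0 < k) (hx : 0 ≤ x)
    (hxy : x + y ≥ 2 * (g : ℝ) - 2)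
    (h : k * y ≤ x ^ 2)
    (hm : m + x ≤ 2 * (g : ℝ) - 2) :
    k - m + 8 * ((g : ℝ) - 1) ≥
      6 * (g : ℝ) - 6 + (1 / 2) * (k + Real.sqrt k * Real.sqrt (k + 8 * (g : ℝ) - 8)) := by
  have hg' : (2 : ℝ) ≤ (g : ℝ) := by exact_mod_cast hg
  have hA : k * (k + 8 * (g : ℝ) - 8) ≤ (2 * x + k) ^ 2 := by nlinarith
  have hs : Real.sqrt k * Real.sqrt (k + 8 * (g : ℝ) - 8) ≤ 2 * x + k := by
    rw [← Real.sqrt_mul hk.le]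
    calc Real.sqrt (k * (k + 8 * (g : ℝ) - 8)) ≤ Real.sqrt ((2 * x + k) ^ 2) :=
          Real.sqrt_le_sqrt hA
      _ = 2 * x + k := by rw [Real.sqrt_sq (by linarith)]
  linarith
end
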